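/- arXiv:2112.14067 — 3 statements merged into one kernel-verified Lean document; each statement's English description precedes it below -/
import Mathlib

section
/- Let m be a positive integer, q = 2^m ≥ 4, and let α = (α_1,…,α_q) be an enumeration of all elements of F_{2^m}. Then the complete weight enumerator of RS_3(α) satisfies W(RS_3(α)) = ∑_{ρ∈F_{2^m}} w_ρ^{2^m} + (2^m−1)·2^{m+1} ∏_{ρ∈F_{2^m}} w_ρ + (2^m−1) ∑_{γ_1∈F_{2^m}^*} ∑_{γ_0∈F_{2^m}} ∏_{ρ∈F_{2^m}, Tr(ρ)=0} w_{γ_1 ρ + γ_0}^2. -/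
open MvPolynomial Finset

/-!
Sort the codewords by `(a₂, a₁)`. For `a₁ = a₂ = 0` they are constant. If exactly one of
`a₁, a₂` vanishes, `x ↦ a₂ x² + a₁ x` is a bijection of `F` (squaring is one in characteristic
`2`), so every value occurs once. If both are nonzero, substituting `x = (a₁ / a₂) t` turns the
codeword into `t ↦ (a₁² / a₂)(t² + t) + a₀`. The additive map `t ↦ t² + t` has kernel `{0, 1}` and
its image lies in the trace-zero hyperplane, which has the same size `q / 2`, so it hits every
trace-zero `ρ` exactly twice. Finally `a₂ ↦ a₁² / a₂` permutes `F^*`, so each `a₁ ≠ 0` contributes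
the same sum over `γ₁ = a₁² / a₂`.
-/

theorem Algebra.trace_pow_card (K L : Type*) [Field K] [Fintype K] [Field L] [Algebra K L]
    [Algebra.IsAlgebraic K L] (x : L) :
    Algebra.trace K L (x ^ Fintype.card K) = Algebra.trace K L x :=
  Algebra.trace_eq_of_algEquiv (FiniteField.frobeniusAlgEquivOfAlgebraic K L) x

section FiberCount

variable {G H : Type*} [AddGroup G] [Fintype G] [AddMonoid H] [DecidableEq H] (f : G →+ H)

theorem AddMonoidHom.card_fiber_eq_card_ker {h : H} (hh : h ∈ univ.image f) :
    #{g | f g = h} = #{g | f g = 0} :=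
  AddMonoidHom.card_fiber_eq_of_mem_range f (by simpa using hh) ⟨0, map_zero f⟩

theorem AddMonoidHom.card_eq_card_image_mul_card_ker :
    Fintype.card G = #(univ.image f) * #{g | f g = 0} := by
  rw [← card_univ, card_eq_sum_card_image f, sum_congr rfl fun h hh => f.card_fiber_eq_card_ker hh,
    sum_const, smul_eq_mul]

theorem AddMonoidHom.prod_comp_eq_prod_image_pow_card_ker {M : Type*} [CommMonoid M]
    (u : H → M) : ∏ g, u (f g) = ∏ h ∈ univ.image f, u h ^ #{g | f g = 0} := by
  rw [prod_comp u f]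
  exact prod_congr rfl fun h hh => by rw [f.card_fiber_eq_card_ker hh]

end FiberCount

section CharTwo

variable (F : Type*) [Field F] [CharP F 2]

def artinSchreier : F →+ F where
  toFun t := t ^ 2 + t
  map_zero' := by simp
  map_add' x y := by rw [CharTwo.add_sq]; ring

theorem artinSchreier_eq_zero_iff {t : F} : artinSchreier F t = 0 ↔ t = 0 ∨ t = 1 := by
  rw [show artinSchreier F t = t * (t + 1) by simp [artinSchreier]; ring, mul_eq_zero,
    CharTwo.add_eq_zero]

theorem card_artinSchreier_ker [Fintype F] [DecidableEq F] :
    #{t | artinSchreier F t = 0} = 2 := by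
  rw [show ({t | artinSchreier F t = 0} : Finset F) = {0, 1} by
    ext t; simp [artinSchreier_eq_zero_iff]]
  exact card_pair zero_ne_one

variable {F}

theorem bijective_mul_sq [Finite F] {c : F} (hc : c ≠ 0) :
    Function.Bijective fun x : F => c * x ^ 2 :=
  Finite.injective_iff_bijective.mp fun x y h =>
    frobenius_inj F 2 (by simpa [frobenius_def] using mul_left_cancel₀ hc h)

end CharTwo

theorem sum_prod_comp_add_eq_card_smul {G R : Type*} [AddGroup G] [Fintype G] [CommSemiring R]
    {g : G → G} (hg : Function.Bijective g) (u : G → R) :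
    ∑ b, ∏ x, u (g x + b) = Fintype.card G • ∏ y, u y := by
  rw [← card_univ, ← sum_const]
  exact sum_congr rfl fun b _ => ((Equiv.addRight b).bijective.comp hg).prod_comp u

theorem sum_eq_add_sum_ne_zero {F M : Type*} [Zero F] [Fintype F] [DecidableEq F] [AddCommMonoid M]
    (f : F → M) : ∑ a, f a = f 0 + ∑ a ∈ {a | a ≠ 0}, f a := by
  rw [filter_ne', add_sum_erase univ f (mem_univ 0)]

section Trace

variable {F : Type*} [Field F] [Fintype F] [Algebra (ZMod 2) F]

local notation "Tr" => Algebra.trace (ZMod 2) F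

theorem two_mul_card_trace_eq_zero : 2 * #{ρ : F | Tr ρ = 0} = Fintype.card F := by
  have hsurj : univ.image (Tr : F →ₗ[ZMod 2] ZMod 2).toAddMonoidHom = univ :=
    image_univ_of_surjective (Algebra.trace_surjective (ZMod 2) F)
  have h := (Tr : F →ₗ[ZMod 2] ZMod 2).toAddMonoidHom.card_eq_card_image_mul_card_ker
  rw [hsurj, card_univ, ZMod.card] at h
  exact h.symm

variable [DecidableEq F] [CharP F 2]

theorem image_artinSchreier : univ.image (artinSchreier F) = ({ρ | Tr ρ = 0} : Finset F) := by
  refine eq_of_subset_of_card_le (fun ρ hρ => ?_) ?_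
  · obtain ⟨t, -, rfl⟩ := mem_image.mp hρ
    have hsq := Algebra.trace_pow_card (ZMod 2) F t
    rw [ZMod.card] at hsq
    simp [artinSchreier, hsq, CharTwo.add_self_eq_zero]
  · have hAS := (artinSchreier F).card_eq_card_image_mul_card_ker
    rw [card_artinSchreier_ker] at hAS
    have hTr := two_mul_card_trace_eq_zero (F := F)
    omega

theorem prod_sq_add_self {M : Type*} [CommMonoid M] (u : F → M) :
    ∏ t, u (t ^ 2 + t) = ∏ ρ ∈ {ρ | Tr ρ = 0}, u ρ ^ 2 := by
  have h := (artinSchreier F).prod_comp_eq_prod_image_pow_card_ker u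
  rwa [card_artinSchreier_ker, image_artinSchreier] at h

theorem prod_quadratic {M : Type*} [CommMonoid M] (u : F → M) {a₂ a₁ : F} (h₂ : a₂ ≠ 0)
    (h₁ : a₁ ≠ 0) (a₀ : F) :
    ∏ x, u (a₂ * x ^ 2 + a₁ * x + a₀) = ∏ ρ ∈ {ρ | Tr ρ = 0}, u (a₁ ^ 2 / a₂ * ρ + a₀) ^ 2 := by
  have hscale : Function.Bijective fun t : F => a₁ / a₂ * t :=
    (Equiv.mulLeft₀ _ (div_ne_zero h₁ h₂)).bijective
  rw [← hscale.prod_comp, ← prod_sq_add_self fun ρ => u (a₁ ^ 2 / a₂ * ρ + a₀)]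
  refine prod_congr rfl fun t _ => congrArg u ?_
  field_simp

theorem sum_sum_prod_quadratic_of_ne_zero {R : Type*} [CommSemiring R] (u : F → R) {a₁ : F}
    (h₁ : a₁ ≠ 0) :
    ∑ a₂ ∈ {a | a ≠ 0}, ∑ a₀, ∏ x, u (a₂ * x ^ 2 + a₁ * x + a₀)
      = ∑ γ₁ ∈ {γ | γ ≠ 0}, ∑ γ₀, ∏ ρ ∈ {ρ | Tr ρ = 0}, u (γ₁ * ρ + γ₀) ^ 2 := by
  have ha₁sq : a₁ ^ 2 ≠ 0 := pow_ne_zero 2 h₁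
  refine sum_nbij' (fun a => a₁ ^ 2 / a) (fun a => a₁ ^ 2 / a) ?_ ?_ ?_ ?_ ?_
  all_goals simp only [mem_filter, mem_univ, true_and]
  · exact fun a ha => div_ne_zero ha₁sq ha
  · exact fun a ha => div_ne_zero ha₁sq ha
  · exact fun a _ => div_div_cancel₀ ha₁sq
  · exact fun a _ => div_div_cancel₀ ha₁sq
  · exact fun a₂ h₂ => sum_congr rfl fun a₀ _ => prod_quadratic u h₂ h₁ a₀

theorem sum_sum_sum_prod_quadratic {R : Type*} [CommSemiring R] (u : F → R) :
    ∑ a₀, ∑ a₁, ∑ a₂, ∏ x, u (a₂ * x ^ 2 + a₁ * x + a₀)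
      = ∑ ρ, u ρ ^ Fintype.card F
        + (((Fintype.card F - 1) * (2 * Fintype.card F) : ℕ) : R) * ∏ ρ, u ρ
        + ((Fintype.card F - 1 : ℕ) : R) *
            ∑ γ₁ ∈ {γ | γ ≠ 0}, ∑ γ₀, ∏ ρ ∈ {ρ | Tr ρ = 0}, u (γ₁ * ρ + γ₀) ^ 2 := by
  set q := Fintype.card F
  set S := ∑ γ₁ ∈ {γ : F | γ ≠ 0}, ∑ γ₀, ∏ ρ ∈ {ρ | Tr ρ = 0}, u (γ₁ * ρ + γ₀) ^ 2
  have hconst : ∑ a₀, ∏ x : F, u (0 * x ^ 2 + 0 * x + a₀) = ∑ ρ, u ρ ^ q := by simp [q]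
  have hsq : ∀ a₂ : F, a₂ ≠ 0 → ∑ a₀, ∏ x, u (a₂ * x ^ 2 + 0 * x + a₀) = q • ∏ ρ, u ρ :=
    fun a₂ h₂ => by simpa using sum_prod_comp_add_eq_card_smul (bijective_mul_sq h₂) u
  have hlin : ∀ a₁ : F, a₁ ≠ 0 → ∑ a₀, ∏ x, u (0 * x ^ 2 + a₁ * x + a₀) = q • ∏ ρ, u ρ :=
    fun a₁ h₁ => by simpa using sum_prod_comp_add_eq_card_smul (Equiv.mulLeft₀ a₁ h₁).bijective u
  have hcard : #{a : F | a ≠ 0} = q - 1 := by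
    rw [filter_ne', card_erase_of_mem (mem_univ 0), card_univ]
  calc _ = ∑ a₁, ∑ a₂, ∑ a₀, ∏ x, u (a₂ * x ^ 2 + a₁ * x + a₀) := by
        rw [sum_comm]; exact sum_congr rfl fun _ _ => sum_comm
    _ = ∑ ρ, u ρ ^ q + ∑ _a₂ ∈ {a : F | a ≠ 0}, q • ∏ ρ, u ρ
          + ∑ _a₁ ∈ {a : F | a ≠ 0}, (q • ∏ ρ, u ρ + S) := by
        rw [sum_eq_add_sum_ne_zero, sum_eq_add_sum_ne_zero, hconst,
          sum_congr rfl fun a₂ h₂ => hsq a₂ (mem_filter.mp h₂).2]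
        refine congrArg _ (sum_congr rfl fun a₁ h₁ => ?_)
        rw [sum_eq_add_sum_ne_zero, hlin a₁ (mem_filter.mp h₁).2,
          sum_sum_prod_quadratic_of_ne_zero u (mem_filter.mp h₁).2]
    _ = _ := by
        simp only [sum_const, hcard, smul_add, nsmul_eq_mul]
        push_cast
        ring

theorem cwe_RS3_char2_full_general (m : ℕ)
    (F : Type) [Field F] [Fintype F] [DecidableEq F] [Algebra (ZMod 2) F]
    (hcard : Fintype.card F = 2 ^ m)
    (α : Fin (2 ^ m) → F) (hα : Function.Bijective α) :
    (∑ a₀ : F, ∑ a₁ : F, ∑ a₂ : F,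
        ∏ i : Fin (2 ^ m), (X (a₂ * α i ^ 2 + a₁ * α i + a₀) : MvPolynomial F ℤ))
      = (∑ ρ : F, (X ρ : MvPolynomial F ℤ) ^ (2 ^ m))
        + (((2 ^ m - 1) * 2 ^ (m + 1) : ℕ) : MvPolynomial F ℤ) *
            ∏ ρ : F, (X ρ : MvPolynomial F ℤ)
        + ((2 ^ m - 1 : ℕ) : MvPolynomial F ℤ) *
            ∑ γ₁ ∈ univ.filter (fun γ₁ : F => γ₁ ≠ 0), ∑ γ₀ : F,
              ∏ ρ ∈ univ.filter (fun ρ : F => Algebra.trace (ZMod 2) F ρ = 0),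
                (X (γ₁ * ρ + γ₀) : MvPolynomial F ℤ) ^ 2 := by
  have : CharP F 2 := charP_of_injective_algebraMap' (ZMod 2) 2
  have hreindex (a₀ a₁ a₂ : F) :=
    hα.prod_comp fun x => (X (a₂ * x ^ 2 + a₁ * x + a₀) : MvPolynomial F ℤ)
  simp only [hreindex]
  rw [sum_sum_sum_prod_quadratic, hcard, ← pow_succ']

/-- Complete weight enumerator of `RS_3(α)` over `F_{2^m}`, where `α` enumerates all of
`F_{2^m}`. -/
theorem cwe_RS3_char2_full (m : ℕ) (hm : 0 < m)
    (F : Type) [Field F] [Fintype F] [DecidableEq F] [Algebra (ZMod 2) F]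
    (hcard : Fintype.card F = 2 ^ m) (h4 : 4 ≤ 2 ^ m)
    (α : Fin (2 ^ m) → F) (hα : Function.Bijective α) :
    (∑ a₀ : F, ∑ a₁ : F, ∑ a₂ : F,
        ∏ i : Fin (2 ^ m), (X (a₂ * α i ^ 2 + a₁ * α i + a₀) : MvPolynomial F ℤ))
      = (∑ ρ : F, (X ρ : MvPolynomial F ℤ) ^ (2 ^ m))
        + (((2 ^ m - 1) * 2 ^ (m + 1) : ℕ) : MvPolynomial F ℤ) *
            ∏ ρ : F, (X ρ : MvPolynomial F ℤ)
        + ((2 ^ m - 1 : ℕ) : MvPolynomial F ℤ) *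
            ∑ γ₁ ∈ univ.filter (fun γ₁ : F => γ₁ ≠ 0), ∑ γ₀ : F,
              ∏ ρ ∈ univ.filter (fun ρ : F => Algebra.trace (ZMod 2) F ρ = 0),
                (X (γ₁ * ρ + γ₀) : MvPolynomial F ℤ) ^ 2 :=
  cwe_RS3_char2_full_general m F hcard α hα
end Trace
end

section
/- Let p be an odd prime, m a positive integer, q = p^m ≥ 3, and let α = (α_1,…,α_q) be an enumeration of all elements of F_q. Then the complete weight enumerator of RS_3(α) satisfies W(RS_3(α)) = ∑_{ρ∈F_q} w_ρ^{q} + (q−1)q ∏_{ρ∈F_q} w_ρ + ((q−1)q/2) ∑_{ε∈{−1,1}} ∑_{γ_1∈F_q} w_{γ_1} ∏_{ρ∈F_q∖{γ_1}} w_ρ^{1+ε η(ρ−γ_1)}, where for ρ ≠ γ_1 the exponent 1+ε η(ρ−γ_1) lies in {0,2}. -/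
open MvPolynomial Finset

/-!
Group the codewords by the leading coefficient `a₂`. For `a₂ = 0` the codewords are the `q`
constant words and, for `a₁ ≠ 0`, words taking every value exactly once. For `a₂ ≠ 0`,
completing the square shows that the word of `a₂ x² + a₁ x + a₀` is a permutation of the word of
`a₂ x² + γ` with `γ = a₀ - a₁² / (4 a₂)`, and the value `ρ` is taken `1 + η(a₂) η(ρ - γ)` times
there, by the count of square roots of `(ρ - γ) / a₂`. Finally exactly `(q - 1) / 2` of the
nonzero `a₂` have `η(a₂) = ε`, for each `ε = ±1`.
-/

section QuadraticWords

variable {F : Type*} [Field F] [Fintype F] {R : Type*} [CommSemiring R]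

lemma prod_comp_mul_add {M : Type*} [CommMonoid M] {a : F} (ha : a ≠ 0) (b : F) (g : F → M) :
    ∏ x : F, g (a * x + b) = ∏ ρ : F, g ρ :=
  Fintype.prod_bijective _ ((Equiv.mulLeft₀ a ha).trans (Equiv.addRight b)).bijective _ _
    fun _ ↦ rfl

lemma prod_comp_quadratic_eq_prod_comp_mul_sq_add {M : Type*} [CommMonoid M]
    (hF : ringChar F ≠ 2) {a₂ : F} (ha₂ : a₂ ≠ 0) (a₁ a₀ : F) (g : F → M) :
    ∏ x : F, g (a₂ * x ^ 2 + a₁ * x + a₀)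
      = ∏ y : F, g (a₂ * y ^ 2 + (a₀ - a₂ * (a₁ / (2 * a₂)) ^ 2)) := by
  have h2 : (2 : F) ≠ 0 := Ring.two_ne_zero hF
  have hsquare : ∀ x : F, a₂ * x ^ 2 + a₁ * x + a₀
      = a₂ * (x + a₁ / (2 * a₂)) ^ 2 + (a₀ - a₂ * (a₁ / (2 * a₂)) ^ 2) := by
    intro x; field_simp; ring
  simp only [hsquare]
  exact Fintype.prod_equiv (Equiv.addRight _) _ _ fun _ ↦ rfl

variable [DecidableEq F]

lemma quadraticChar_inv (a : F) : quadraticChar F a⁻¹ = quadraticChar F a := by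
  rw [← MulChar.inv_apply', (quadraticChar_isQuadratic F).inv]

lemma card_filter_mul_sq_add_eq (hF : ringChar F ≠ 2) {a : F} (ha : a ≠ 0) (γ ρ : F) :
    (#{x : F | a * x ^ 2 + γ = ρ} : ℤ) = 1 + quadraticChar F a * quadraticChar F (ρ - γ) := by
  have hsqrts : {x : F | x ^ 2 = (ρ - γ) / a}.toFinset = ({x | a * x ^ 2 + γ = ρ} : Finset F) := by
    ext x
    simp only [Set.mem_toFinset, Set.mem_ofPred_eq, mem_filter, mem_univ, true_and,
      eq_div_iff ha]
    constructor <;> intro hx <;> linear_combination hx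
  rw [← hsqrts, quadraticChar_card_sqrts hF, div_eq_mul_inv, map_mul, quadraticChar_inv]
  ring

lemma prod_comp_mul_sq_add {M : Type*} [CommMonoid M] (hF : ringChar F ≠ 2) {a : F} (ha : a ≠ 0)
    (γ : F) (g : F → M) :
    ∏ x : F, g (a * x ^ 2 + γ) = g γ * ∏ ρ ∈ univ.erase γ,
      g ρ ^ (1 + quadraticChar F a * quadraticChar F (ρ - γ)).toNat := by
  have hfibers : ∀ ρ : F,
      #{x : F | a * x ^ 2 + γ = ρ} = (1 + quadraticChar F a * quadraticChar F (ρ - γ)).toNat :=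
    fun ρ ↦ by have := card_filter_mul_sq_add_eq hF ha γ ρ; omega
  rw [← prod_fiberwise' univ (fun x ↦ a * x ^ 2 + γ), ← mul_prod_erase univ _ (mem_univ γ)]
  simp only [prod_const, hfibers, sub_self, MulChar.map_zero, mul_zero, add_zero, Int.toNat_one,
    pow_one]

lemma sum_sum_prod_comp_mul_add (g : F → R) :
    ∑ a₁ : F, ∑ a₀ : F, ∏ x : F, g (a₁ * x + a₀)
      = ∑ ρ : F, g ρ ^ Fintype.card F
        + ((Fintype.card F - 1) * Fintype.card F) • ∏ ρ : F, g ρ := by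
  rw [← add_sum_erase univ _ (mem_univ 0)]
  congr 1
  · simp only [zero_mul, zero_add, prod_const, card_univ]
  · rw [sum_congr rfl fun a₁ ha₁ ↦ sum_congr rfl fun a₀ _ ↦
      prod_comp_mul_add (ne_of_mem_erase ha₁) a₀ g]
    simp only [sum_const, card_erase_of_mem (mem_univ _), card_univ, smul_smul]

lemma sum_sum_prod_comp_quadratic (hF : ringChar F ≠ 2) {a₂ : F} (ha₂ : a₂ ≠ 0) (g : F → R) :
    ∑ a₁ : F, ∑ a₀ : F, ∏ x : F, g (a₂ * x ^ 2 + a₁ * x + a₀)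
      = Fintype.card F • ∑ γ : F, g γ * ∏ ρ ∈ univ.erase γ,
          g ρ ^ (1 + quadraticChar F a₂ * quadraticChar F (ρ - γ)).toNat := by
  have hshift : ∀ a₁ : F, ∑ a₀ : F, ∏ x : F, g (a₂ * x ^ 2 + a₁ * x + a₀)
      = ∑ γ : F, ∏ x : F, g (a₂ * x ^ 2 + γ) := fun a₁ ↦ by
    simp only [prod_comp_quadratic_eq_prod_comp_mul_sq_add hF ha₂]
    exact Fintype.sum_equiv (Equiv.subRight _) _ _ fun _ ↦ rfl
  simp only [hshift, prod_comp_mul_sq_add hF ha₂, sum_const, card_univ]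

lemma card_filter_quadraticChar_eq (hF : ringChar F ≠ 2) {ε : ℤ} (hε : ε = 1 ∨ ε = -1) :
    #{a ∈ univ.erase (0 : F) | quadraticChar F a = ε} = (Fintype.card F - 1) / 2 := by
  have hvalues : ∀ a ∈ univ.erase (0 : F), quadraticChar F a
      = (if quadraticChar F a = 1 then 1 else 0) - (if quadraticChar F a = -1 then 1 else 0) ∧
      (if quadraticChar F a = 1 then 1 else 0) + (if quadraticChar F a = -1 then 1 else 0)
        = (1 : ℤ) := fun a ha ↦ by
    rcases quadraticChar_dichotomy (ne_of_mem_erase ha) with h | h <;> simp [h]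
  have hsum := quadraticChar_sum_zero hF
  rw [← add_sum_erase univ _ (mem_univ 0), MulChar.map_zero, zero_add,
    sum_congr rfl fun a ha ↦ (hvalues a ha).1, sum_sub_distrib] at hsum
  have hcount := sum_congr rfl fun a ha ↦ (hvalues a ha).2
  rw [sum_add_distrib] at hcount
  simp only [sum_boole, sum_const, card_erase_of_mem (mem_univ _), card_univ, nsmul_eq_mul,
    mul_one] at hsum hcount
  rcases hε with rfl | rfl <;> omega

lemma sum_erase_zero_comp_quadraticChar {M : Type*} [AddCommMonoid M] (hF : ringChar F ≠ 2)
    (f : ℤ → M) :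
    ∑ a ∈ univ.erase (0 : F), f (quadraticChar F a)
      = ((Fintype.card F - 1) / 2) • ∑ ε ∈ ({-1, 1} : Finset ℤ), f ε := by
  have hmaps : ∀ a ∈ univ.erase (0 : F), quadraticChar F a ∈ ({-1, 1} : Finset ℤ) := fun a ha ↦ by
    rcases quadraticChar_dichotomy (ne_of_mem_erase ha) with h | h <;> simp [h]
  rw [← sum_fiberwise_of_maps_to hmaps, smul_sum]
  refine sum_congr rfl fun ε hε ↦ ?_
  have hε' : ε = 1 ∨ ε = -1 := by simp only [mem_insert, mem_singleton] at hε; tauto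
  rw [sum_congr rfl fun a ha ↦ by rw [(mem_filter.mp ha).2], sum_const,
    card_filter_quadraticChar_eq hF hε']

theorem sum_prod_comp_quadratic (hF : ringChar F ≠ 2) (g : F → R) :
    ∑ a₀ : F, ∑ a₁ : F, ∑ a₂ : F, ∏ x : F, g (a₂ * x ^ 2 + a₁ * x + a₀)
      = ∑ ρ : F, g ρ ^ Fintype.card F
        + ((Fintype.card F - 1) * Fintype.card F) • ∏ ρ : F, g ρ
        + ((Fintype.card F - 1) * Fintype.card F / 2) •
            ∑ ε ∈ ({-1, 1} : Finset ℤ), ∑ γ : F, g γ * ∏ ρ ∈ univ.erase γ,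
              g ρ ^ (1 + ε * quadraticChar F (ρ - γ)).toNat := by
  have hcard : (Fintype.card F - 1) * Fintype.card F / 2
      = Fintype.card F * ((Fintype.card F - 1) / 2) := by
    have := FiniteField.odd_card_of_char_ne_two hF
    rw [mul_comm, Nat.mul_div_assoc _ (by omega)]
  have hreorder : ∑ a₀ : F, ∑ a₁ : F, ∑ a₂ : F, ∏ x : F, g (a₂ * x ^ 2 + a₁ * x + a₀)
      = ∑ a₂ : F, ∑ a₁ : F, ∑ a₀ : F, ∏ x : F, g (a₂ * x ^ 2 + a₁ * x + a₀) := by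
    rw [sum_congr rfl fun _ _ ↦ sum_comm, sum_comm]
    exact sum_congr rfl fun _ _ ↦ sum_comm
  rw [hreorder, ← add_sum_erase univ _ (mem_univ 0),
    sum_congr rfl fun a₂ ha₂ ↦ sum_sum_prod_comp_quadratic hF (ne_of_mem_erase ha₂) g,
    ← smul_sum, sum_erase_zero_comp_quadraticChar hF fun ε ↦ ∑ γ : F, g γ * ∏ ρ ∈ univ.erase γ,
      g ρ ^ (1 + ε * quadraticChar F (ρ - γ)).toNat, smul_smul, ← hcard]
  simp only [zero_mul, zero_add, sum_sum_prod_comp_mul_add]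

end QuadraticWords

theorem cwe_RS3_odd_full_general (p m : ℕ) (hodd : Odd p)
    (F : Type) [Field F] [Fintype F] [DecidableEq F]
    (hcard : Fintype.card F = p ^ m)
    (α : Fin (p ^ m) → F) (hα : Function.Bijective α) :
    (∑ a₀ : F, ∑ a₁ : F, ∑ a₂ : F,
        ∏ i : Fin (p ^ m), (X (a₂ * α i ^ 2 + a₁ * α i + a₀) : MvPolynomial F ℤ))
      = (∑ ρ : F, (X ρ : MvPolynomial F ℤ) ^ (p ^ m))
        + (((p ^ m - 1) * p ^ m : ℕ) : MvPolynomial F ℤ) *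
            ∏ ρ : F, (X ρ : MvPolynomial F ℤ)
        + (((p ^ m - 1) * p ^ m / 2 : ℕ) : MvPolynomial F ℤ) *
            ∑ ε ∈ ({-1, 1} : Finset ℤ), ∑ γ₁ : F,
              (X γ₁ : MvPolynomial F ℤ) *
                ∏ ρ ∈ univ.erase γ₁,
                  (X ρ : MvPolynomial F ℤ) ^ (1 + ε * quadraticChar F (ρ - γ₁)).toNat := by
  have hF : ringChar F ≠ 2 := by
    rw [Ne, FiniteField.even_card_iff_char_two, hcard, ← Nat.even_iff,
      Nat.not_even_iff_odd]
    exact hodd.pow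
  have hreindex : ∀ a₂ a₁ a₀ : F,
      ∏ i : Fin (p ^ m), (X (a₂ * α i ^ 2 + a₁ * α i + a₀) : MvPolynomial F ℤ)
        = ∏ x : F, X (a₂ * x ^ 2 + a₁ * x + a₀) :=
    fun _ _ _ ↦ Fintype.prod_bijective α hα _ _ fun _ ↦ rfl
  simp only [hreindex, sum_prod_comp_quadratic hF, hcard, nsmul_eq_mul]

/-- Complete weight enumerator of `RS_3(α)` over `F_q`, `q = p^m` with `p` an odd prime,
where `α` enumerates all of `F_q`. -/
theorem cwe_RS3_odd_full (p m : ℕ) (hp : p.Prime) (hodd : Odd p) (hm : 0 < m)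
    (F : Type) [Field F] [Fintype F] [DecidableEq F]
    (hcard : Fintype.card F = p ^ m) (h3 : 3 ≤ p ^ m)
    (α : Fin (p ^ m) → F) (hα : Function.Bijective α) :
    (∑ a₀ : F, ∑ a₁ : F, ∑ a₂ : F,
        ∏ i : Fin (p ^ m), (X (a₂ * α i ^ 2 + a₁ * α i + a₀) : MvPolynomial F ℤ))
      = (∑ ρ : F, (X ρ : MvPolynomial F ℤ) ^ (p ^ m))
        + (((p ^ m - 1) * p ^ m : ℕ) : MvPolynomial F ℤ) *
            ∏ ρ : F, (X ρ : MvPolynomial F ℤ)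
        + (((p ^ m - 1) * p ^ m / 2 : ℕ) : MvPolynomial F ℤ) *
            ∑ ε ∈ ({-1, 1} : Finset ℤ), ∑ γ₁ : F,
              (X γ₁ : MvPolynomial F ℤ) *
                ∏ ρ ∈ univ.erase γ₁,
                  (X ρ : MvPolynomial F ℤ) ^ (1 + ε * quadraticChar F (ρ - γ₁)).toNat :=
  cwe_RS3_odd_full_general p m hodd F hcard α hα
end

section
/- Let p be an odd prime, m a positive integer, q = p^m ≥ 4, let β ∈ F_q, and let α = (α_1,…,α_{q−1}) be an enumeration of F_q∖{β}. Then the complete weight enumerator of ERS_3(α) satisfies W(ERS_3(α)) = w_0 ∑_{ρ∈F_q} w_ρ^{q−1} + (q−1) ∑_{γ_0∈F_q} w_0 ∏_{ρ∈F_q∖{γ_0}} w_ρ + ∑_{γ_2∈F_q^*} ∑_{γ_1∈F_q} w_{γ_2} ∏_{ρ∈F_q∖{γ_1}} w_ρ^{1+η(γ_2)η(ρ−γ_1)} + 2 ∑_{ε∈{−1,1}} ∑_{γ_2∈F_q^*, η(γ_2)=ε} ∑_{γ_1∈F_q} ∑_{γ_0∈F_q, η(γ_0)=ε} w_{γ_2}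 w_{γ_1} w_{γ_0+γ_1} ∏_{ρ∈F_q∖{γ_1, γ_0+γ_1}} w_ρ^{1+ε η(ρ−γ_1)}. -/
open MvPolynomial Finset

/-!
Puncturing at `β` deletes the value `f β` from the multiset of values of `f` on `F`.
If `a₂ = 0`, `f` is constant or a bijection `F → F`. If `a₂ ≠ 0`, complete the square,
`f = a₂ (x - s)² + t`; over all of `F` the value `ρ` is then taken `1 + η(a₂) η(ρ - t)` times.
For `s = β` the deleted value is `t`, taken once. For `s ≠ β` it is `c + t` with
`c = a₂ (β - s)²`, taken twice since `η(c) = η(a₂)`; as `s` runs over `F ∖ {β}`, `c` runs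
twice over the values with `η(c) = η(a₂)`, which gives the factor `2`.
-/

@[to_additive]
theorem Finset.prod_comp_eq_prod_pow_card_filter {ι κ M : Type*} [Fintype κ] [DecidableEq κ]
    [CommMonoid M] (s : Finset ι) (f : κ → M) (g : ι → κ) :
    ∏ i ∈ s, f (g i) = ∏ k, f k ^ #{i ∈ s | g i = k} := by
  rw [← prod_fiberwise' s g f]
  simp only [prod_const]

theorem Finset.card_filter_erase_of_ne {ι κ : Type*} [DecidableEq ι] [DecidableEq κ]
    (s : Finset ι) (g : ι → κ) {i : ι} {k : κ} (h : g i ≠ k) :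
    #{j ∈ s.erase i | g j = k} = #{j ∈ s | g j = k} := by
  rw [filter_erase, erase_eq_of_notMem (by simp [h])]

theorem prod_comp_eq_prod_erase_of_injective {ι F M : Type*} [Fintype ι] [Fintype F]
    [DecidableEq F] [CommMonoid M] {α : ι → F} (hα : α.Injective) {β : F} (hβ : ∀ i, α i ≠ β)
    (hcard : Fintype.card ι + 1 = Fintype.card F) (f : F → M) :
    ∏ i, f (α i) = ∏ x ∈ univ.erase β, f x := by
  have himage : univ.image α = univ.erase β := by
    refine eq_of_subset_of_card_le (fun x hx => ?_) ?_
    · obtain ⟨i, -, rfl⟩ := mem_image.1 hx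
      exact mem_erase.2 ⟨hβ i, mem_univ _⟩
    · rw [card_image_of_injective _ hα, card_erase_of_mem (mem_univ β), card_univ,
        card_univ]
      omega
  rw [← himage, prod_image hα.injOn]

theorem sum_sum_quadratic_eq_sum_sum_vertex {F A : Type*} [Field F] [Fintype F]
    [AddCommMonoid A] (h2 : (2 : F) ≠ 0) {a : F} (ha : a ≠ 0) (f : (F → F) → A) :
    ∑ b, ∑ c, f (fun x => a * x ^ 2 + b * x + c)
      = ∑ s, ∑ t, f (fun x => a * (x - s) ^ 2 + t) := by
  have h2a : -(2 * a) ≠ 0 := neg_ne_zero.2 (mul_ne_zero h2 ha)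
  rw [← Equiv.sum_comp (Equiv.mulLeft₀ _ h2a)]
  refine sum_congr rfl fun s _ => ?_
  rw [← Equiv.sum_comp (Equiv.addLeft (a * s ^ 2))]
  refine sum_congr rfl fun t _ => congrArg f (funext fun x => ?_)
  simp only [Equiv.mulLeft₀_apply, Equiv.coe_addLeft]
  ring

section QuadraticChar

variable {F : Type*} [Field F] [Fintype F] [DecidableEq F]

local notation "η" => quadraticChar F

theorem card_filter_mul_sq_eq (hF : ringChar F ≠ 2) {a : F} (ha : a ≠ 0) (c : F) :
    #{x : F | a * x ^ 2 = c} = (1 + η a * η c).toNat := by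
  have hcount : #{x : F | a * x ^ 2 = c} = #{y : F | y ^ 2 = a * c} :=
    card_equiv (Equiv.mulLeft₀ a ha) fun x => by
      simp only [mem_filter, mem_univ, true_and, Equiv.mulLeft₀_apply, mul_pow, sq a, mul_assoc,
        mul_right_inj' ha]
  have := quadraticChar_card_sqrts hF (a * c)
  rw [Set.toFinset_ofPred, ← hcount, map_mul] at this
  rw [add_comm, ← this, Int.toNat_natCast]

theorem card_filter_mul_sub_sq_add_eq (hF : ringChar F ≠ 2) {a : F} (ha : a ≠ 0) (s t ρ : F) :
    #{x : F | a * (x - s) ^ 2 + t = ρ} = (1 + η a * η (ρ - t)).toNat := by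
  rw [← card_filter_mul_sq_eq hF ha]
  exact card_equiv (Equiv.subRight s) fun x => by simp [eq_sub_iff_add_eq]

variable {M : Type*} [CommMonoid M]

theorem prod_erase_mul_sub_sq_add_self (hF : ringChar F ≠ 2) {a : F} (ha : a ≠ 0) (s t : F)
    (w : F → M) :
    ∏ x ∈ univ.erase s, w (a * (x - s) ^ 2 + t)
      = ∏ ρ ∈ univ.erase t, w ρ ^ (1 + η a * η (ρ - t)).toNat := by
  have hfiber_t : #{x ∈ univ.erase s | a * (x - s) ^ 2 + t = t} = 0 := by
    refine card_eq_zero.2 (filter_eq_empty_iff.2 fun x hx => ?_)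
    simpa [sub_eq_zero, ha] using ne_of_mem_erase hx
  rw [prod_comp_eq_prod_pow_card_filter, ← mul_prod_erase univ _ (mem_univ t), hfiber_t, pow_zero,
    one_mul]
  refine prod_congr rfl fun ρ hρ => ?_
  rw [card_filter_erase_of_ne _ _ (by simpa [eq_comm] using hρ),
    card_filter_mul_sub_sq_add_eq hF ha]

theorem prod_erase_mul_sub_sq_add_of_ne (hF : ringChar F ≠ 2) {a : F} (ha : a ≠ 0) {s β : F}
    (hs : s ≠ β) (t : F) (w : F → M) :
    ∏ x ∈ univ.erase β, w (a * (x - s) ^ 2 + t)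
      = w t * w (a * (β - s) ^ 2 + t) *
          ∏ ρ ∈ univ \ {t, a * (β - s) ^ 2 + t}, w ρ ^ (1 + η a * η (ρ - t)).toNat := by
  set c := a * (β - s) ^ 2 with hc
  have hc0 : c ≠ 0 := mul_ne_zero ha (pow_ne_zero 2 (sub_ne_zero.2 hs.symm))
  have htc : t ≠ c + t := by simpa [eq_comm] using hc0
  have hfiber_t : #{x ∈ univ.erase β | a * (x - s) ^ 2 + t = t} = 1 := by
    rw [card_filter_erase_of_ne _ (fun x => a * (x - s) ^ 2 + t) htc.symm,
      card_filter_mul_sub_sq_add_eq hF ha]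
    simp
  have hfiber_ct : #{x ∈ univ.erase β | a * (x - s) ^ 2 + t = c + t} = 1 := by
    rw [filter_erase, card_erase_of_mem (by simp [hc]), card_filter_mul_sub_sq_add_eq hF ha,
      add_sub_cancel_right, hc, map_mul, quadraticChar_sq_one' (sub_ne_zero.2 hs.symm), mul_one,
      ← sq, quadraticChar_sq_one ha]
    rfl
  rw [prod_comp_eq_prod_pow_card_filter, ← prod_sdiff (subset_univ {t, c + t}), prod_pair htc,
    hfiber_t, hfiber_ct, pow_one, pow_one, mul_comm]
  refine congrArg _ (prod_congr rfl fun ρ hρ => ?_)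
  have hρ : ρ ≠ t ∧ ρ ≠ c + t := by simpa using hρ
  rw [card_filter_erase_of_ne _ (fun x => a * (x - s) ^ 2 + t) (Ne.symm hρ.2),
    card_filter_mul_sub_sq_add_eq hF ha]

theorem sum_erase_comp_mul_sub_sq {A : Type*} [AddCommMonoid A] (hF : ringChar F ≠ 2) {a : F}
    (ha : a ≠ 0) (β : F) (K : F → A) :
    ∑ s ∈ univ.erase β, K (a * (β - s) ^ 2) = 2 • ∑ c ∈ univ with η c = η a, K c := by
  rw [sum_comp_eq_sum_nsmul_card_filter, sum_filter, smul_sum]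
  refine sum_congr rfl fun c _ => ?_
  rcases eq_or_ne c 0 with rfl | hc
  · have hempty : #{s ∈ univ.erase β | a * (β - s) ^ 2 = 0} = 0 := by
      refine card_eq_zero.2 (filter_eq_empty_iff.2 fun s hs => ?_)
      exact mul_ne_zero ha (pow_ne_zero 2 (sub_ne_zero.2 (ne_of_mem_erase hs).symm))
    rw [hempty, zero_smul, quadraticChar_zero,
      if_neg fun h => ha (quadraticChar_eq_zero_iff.1 h.symm), smul_zero]
  · have hcard : #{s ∈ univ.erase β | a * (β - s) ^ 2 = c} = (1 + η a * η c).toNat := by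
      have hshift := card_filter_mul_sub_sq_add_eq hF ha β 0 c
      rw [sub_zero] at hshift
      rw [card_filter_erase_of_ne _ _ (by simpa using hc.symm), ← hshift]
      congr! 3 with s
      ring
    rw [hcard]
    rcases quadraticChar_dichotomy ha with h | h <;>
      rcases quadraticChar_dichotomy hc with h' | h' <;> simp [h, h']

variable {R : Type*} [CommSemiring R]

theorem sum_sum_prod_erase_affine (β : F) (w : F → R) :
    ∑ b, ∑ c, ∏ x ∈ univ.erase β, w (b * x + c)
      = ∑ ρ, w ρ ^ (Fintype.card F - 1)
        + (Fintype.card F - 1 : ℕ) * ∑ γ, ∏ ρ ∈ univ.erase γ, w ρ := by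
  have hcard (γ : F) : #(univ.erase γ) = Fintype.card F - 1 := by
    rw [card_erase_of_mem (mem_univ γ), card_univ]
  rw [← add_sum_erase _ _ (mem_univ 0)]
  congr 1
  · simp [prod_const, hcard]
  · rw [← hcard 0, ← nsmul_eq_mul, ← sum_const]
    refine sum_congr rfl fun b hb => ?_
    refine Fintype.sum_equiv (Equiv.addLeft (b * β)) _ _ fun c =>
      prod_equiv ((Equiv.mulLeft₀ b (ne_of_mem_erase hb)).trans (Equiv.addRight c)) (fun x => ?_)
        fun _ _ => rfl
    simp [ne_of_mem_erase hb]

theorem sum_sum_prod_erase_quadratic (hF : ringChar F ≠ 2) {a : F} (ha : a ≠ 0) (β : F)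
    (w : F → R) :
    ∑ b, ∑ c, ∏ x ∈ univ.erase β, w (a * x ^ 2 + b * x + c)
      = ∑ t, ∏ ρ ∈ univ.erase t, w ρ ^ (1 + η a * η (ρ - t)).toNat
        + 2 * ∑ t, ∑ c ∈ univ with η c = η a,
            w t * w (c + t) * ∏ ρ ∈ univ \ {t, c + t}, w ρ ^ (1 + η a * η (ρ - t)).toNat := by
  refine (sum_sum_quadratic_eq_sum_sum_vertex (Ring.two_ne_zero hF) ha
    fun g => ∏ x ∈ univ.erase β, w (g x)).trans ?_
  rw [← add_sum_erase _ _ (mem_univ β)]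
  congr 1
  · exact sum_congr rfl fun t _ => prod_erase_mul_sub_sq_add_self hF ha β t w
  · rw [sum_congr rfl fun s hs => sum_congr rfl fun t _ =>
      prod_erase_mul_sub_sq_add_of_ne hF ha (ne_of_mem_erase hs) t w, sum_comm,
      ← Nat.ofNat_nsmul_eq_mul, smul_sum]
    exact sum_congr rfl fun t _ => sum_erase_comp_mul_sub_sq hF ha β
      fun c => w t * w (c + t) * ∏ ρ ∈ univ \ {t, c + t}, w ρ ^ (1 + η a * η (ρ - t)).toNat

theorem sum_sum_filter_quadraticChar_eq {A : Type*} [AddCommMonoid A] (P : F → ℤ → A) :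
    ∑ ε ∈ ({-1, 1} : Finset ℤ), ∑ γ ∈ univ with γ ≠ 0 ∧ η γ = ε, P γ ε
      = ∑ γ ∈ univ with γ ≠ 0, P γ (η γ) := by
  rw [← sum_fiberwise_of_maps_to (g := η) (t := {-1, 1}) fun γ hγ => by
    rcases quadraticChar_dichotomy (mem_filter.1 hγ).2 with h | h <;> simp [h]]
  refine sum_congr rfl fun ε _ => ?_
  rw [filter_filter]
  exact sum_congr rfl fun γ hγ => by rw [(mem_filter.1 hγ).2.2]

end QuadraticChar

theorem cwe_ERS3_odd_punctured_general (p m : ℕ) (hodd : Odd p)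
    (F : Type) [Field F] [Fintype F] [DecidableEq F]
    (hcard : Fintype.card F = p ^ m)
    (β : F) (α : Fin (p ^ m - 1) → F) (hα : Function.Injective α)
    (hβ : ∀ i, α i ≠ β) :
    (∑ a₀ : F, ∑ a₁ : F, ∑ a₂ : F,
        (X a₂ : MvPolynomial F ℤ) *
          ∏ i : Fin (p ^ m - 1), (X (a₂ * α i ^ 2 + a₁ * α i + a₀) : MvPolynomial F ℤ))
      = (X 0 : MvPolynomial F ℤ) * (∑ ρ : F, (X ρ : MvPolynomial F ℤ) ^ (p ^ m - 1))
        + ((p ^ m - 1 : ℕ) : MvPolynomial F ℤ) *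
            ∑ γ₀ : F, (X 0 : MvPolynomial F ℤ) * ∏ ρ ∈ univ.erase γ₀, (X ρ : MvPolynomial F ℤ)
        + ∑ γ₂ ∈ univ.filter (fun γ₂ : F => γ₂ ≠ 0), ∑ γ₁ : F,
            (X γ₂ : MvPolynomial F ℤ) *
              ∏ ρ ∈ univ.erase γ₁,
                (X ρ : MvPolynomial F ℤ)
                  ^ (1 + quadraticChar F γ₂ * quadraticChar F (ρ - γ₁)).toNat
        + 2 * ∑ ε ∈ ({-1, 1} : Finset ℤ),
            ∑ γ₂ ∈ univ.filter (fun γ₂ : F => γ₂ ≠ 0 ∧ quadraticChar F γ₂ = ε),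
              ∑ γ₁ : F, ∑ γ₀ ∈ univ.filter (fun γ₀ : F => quadraticChar F γ₀ = ε),
                (X γ₂ : MvPolynomial F ℤ) * (X γ₁ : MvPolynomial F ℤ) *
                    (X (γ₀ + γ₁) : MvPolynomial F ℤ) *
                  ∏ ρ ∈ univ \ {γ₁, γ₀ + γ₁},
                    (X ρ : MvPolynomial F ℤ) ^ (1 + ε * quadraticChar F (ρ - γ₁)).toNat := by
  have hF : ringChar F ≠ 2 := by
    simpa [FiniteField.even_card_iff_char_two, hcard, ← Nat.odd_iff] using hodd.pow
  have hcardα : Fintype.card (Fin (p ^ m - 1)) + 1 = Fintype.card F := by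
    have := hcard ▸ Fintype.card_pos (α := F)
    rw [Fintype.card_fin, hcard]
    omega
  have hprod (a₀ a₁ a₂ : F) : ∏ i, (X (a₂ * α i ^ 2 + a₁ * α i + a₀) : MvPolynomial F ℤ)
      = ∏ x ∈ univ.erase β, X (a₂ * x ^ 2 + a₁ * x + a₀) :=
    prod_comp_eq_prod_erase_of_injective hα hβ hcardα fun x => X (a₂ * x ^ 2 + a₁ * x + a₀)
  simp only [hprod]
  calc
    _ = X 0 * (∑ b, ∑ c, ∏ x ∈ univ.erase β, X (b * x + c))
        + ∑ a ∈ univ.filter (· ≠ 0), X a * ∑ b, ∑ c, ∏ x ∈ univ.erase β,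
            (X (a * x ^ 2 + b * x + c) : MvPolynomial F ℤ) := by
      rw [sum_comm, sum_congr rfl fun _ _ => sum_comm, sum_comm, ← add_sum_erase _ _ (mem_univ 0),
        filter_ne']
      simp only [zero_mul, zero_add, mul_sum]
    _ = _ := by
      rw [sum_sum_prod_erase_affine, hcard, sum_sum_filter_quadraticChar_eq,
        sum_congr rfl fun a ha => congrArg (X a * ·)
          (sum_sum_prod_erase_quadratic hF (mem_filter.1 ha).2 β X)]
      simp only [mul_add, sum_add_distrib, mul_sum]
      ring_nf

/-- Complete weight enumerator of `ERS_3(α)` over `F_q`, `q = p^m` with `p` an odd prime,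
where `α` enumerates `F_q \ {β}`. -/
theorem cwe_ERS3_odd_punctured (p m : ℕ) (hp : p.Prime) (hodd : Odd p) (hm : 0 < m)
    (F : Type) [Field F] [Fintype F] [DecidableEq F]
    (hcard : Fintype.card F = p ^ m) (h4 : 4 ≤ p ^ m)
    (β : F) (α : Fin (p ^ m - 1) → F) (hα : Function.Injective α)
    (hβ : ∀ i, α i ≠ β) :
    (∑ a₀ : F, ∑ a₁ : F, ∑ a₂ : F,
        (X a₂ : MvPolynomial F ℤ) *
          ∏ i : Fin (p ^ m - 1), (X (a₂ * α i ^ 2 + a₁ * α i + a₀) : MvPolynomial F ℤ))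
      = (X 0 : MvPolynomial F ℤ) * (∑ ρ : F, (X ρ : MvPolynomial F ℤ) ^ (p ^ m - 1))
        + ((p ^ m - 1 : ℕ) : MvPolynomial F ℤ) *
            ∑ γ₀ : F, (X 0 : MvPolynomial F ℤ) * ∏ ρ ∈ univ.erase γ₀, (X ρ : MvPolynomial F ℤ)
        + ∑ γ₂ ∈ univ.filter (fun γ₂ : F => γ₂ ≠ 0), ∑ γ₁ : F,
            (X γ₂ : MvPolynomial F ℤ) *
              ∏ ρ ∈ univ.erase γ₁,
                (X ρ : MvPolynomial F ℤ)
                  ^ (1 + quadraticChar F γ₂ * quadraticChar F (ρ - γ₁)).toNat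
        + 2 * ∑ ε ∈ ({-1, 1} : Finset ℤ),
            ∑ γ₂ ∈ univ.filter (fun γ₂ : F => γ₂ ≠ 0 ∧ quadraticChar F γ₂ = ε),
              ∑ γ₁ : F, ∑ γ₀ ∈ univ.filter (fun γ₀ : F => quadraticChar F γ₀ = ε),
                (X γ₂ : MvPolynomial F ℤ) * (X γ₁ : MvPolynomial F ℤ) *
                    (X (γ₀ + γ₁) : MvPolynomial F ℤ) *
                  ∏ ρ ∈ univ \ {γ₁, γ₀ + γ₁},
                    (X ρ : MvPolynomial F ℤ) ^ (1 + ε * quadraticChar F (ρ - γ₁)).toNat :=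
  cwe_ERS3_odd_punctured_general p m hodd F hcard β α hα hβ
end
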